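/- arXiv:2402.04613 — 2 statements merged into one kernel-verified Lean document; each statement's English description precedes it below -/
import Mathlib

section
/- Let K be a bounded, C_0, characteristic kernel on ℝ^d, f an entropy function such that 1 is the unique minimizer of f, ν ∈ M_+(ℝ^d), and λ > 0. For μ ∈ M(ℝ^d), let σ̂_μ ∈ M_+(ℝ^d) denote the unique minimizer defining D^λ_{f,ν}(μ). Then the map μ ↦ μ − σ̂_μ is (1/λ·λ =) nonexpansive in the MMD metric in the following sense (expressing that the gradient of D^λ_{f,ν} is (1/λ)-Lipschitz): for all μ, ρ ∈ M(ℝ^d), d_K(μ − σ̂_μ, ρ − σ̂_ρ) ≤ d_K(μ, ρ). -/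
open MeasureTheory ENNReal Filter Topology Set
open scoped ZeroAtInfty RealInnerProductSpace BoundedContinuousFunction

noncomputable section

/-- Euclidean space `ℝ^d`. -/
abbrev Rd (d : ℕ) : Type := EuclideanSpace ℝ (Fin d)

/-- An entropy function: a proper, convex, lower semicontinuous `f : ℝ → [0,∞]`
with `f x = ∞` for `x < 0` and `f 1 = 0` (properness is automatic from `f 1 = 0`). -/
structure IsEntropy (f : ℝ → ℝ≥0∞) : Prop where
  convex : ∀ x y a b : ℝ, 0 ≤ a → 0 ≤ b → a + b = 1 →
    f (a * x + b * y) ≤ ENNReal.ofReal a * f x + ENNReal.ofReal b * f y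
  lsc : LowerSemicontinuous f
  top_of_neg : ∀ x : ℝ, x < 0 → f x = ⊤
  one_eq_zero : f 1 = 0

/-- `1` is the unique minimizer of the entropy function `f`, i.e. `f t > 0` for `t ≠ 1`. -/
def UniqueMinOne (f : ℝ → ℝ≥0∞) : Prop := ∀ t : ℝ, t ≠ 1 → 0 < f t

/-- The recession constant `f'_∞ = lim_{t → ∞} f t / t` (the limit exists for convex `f`,
so it coincides with the `limsup`). -/
noncomputable def recession (f : ℝ → ℝ≥0∞) : ℝ≥0∞ :=
  Filter.limsup (fun t : ℝ => f t / ENNReal.ofReal t) Filter.atTop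

/-- The `f`-divergence of finite nonnegative measures:
`D_f(μ|ν) = ∫ f(dμ/dν) dν + f'_∞ · μˢ(ℝ^d)` where `μ = (dμ/dν) ν + μˢ`
is the Lebesgue decomposition of `μ` w.r.t. `ν` (convention `0 ⬝ ∞ = 0`). -/
noncomputable def fDiv {d : ℕ} (f : ℝ → ℝ≥0∞) (μ ν : Measure (Rd d)) : ℝ≥0∞ :=
  ∫⁻ x, f ((μ.rnDeriv ν x).toReal) ∂ν + recession f * μ.singularPart ν Set.univ

/-- A kernel on `ℝ^d`: symmetric, positive definite, bounded, and with
`K x · ∈ C₀(ℝ^d)` for every `x`. -/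
structure IsKernel {d : ℕ} (K : Rd d → Rd d → ℝ) : Prop where
  symm : ∀ x y, K x y = K y x
  posdef : ∀ (n : ℕ) (x : Fin n → Rd d) (a : Fin n → ℝ),
    0 ≤ ∑ i, ∑ j, a i * a j * K (x i) (x j)
  bounded : ∃ C : ℝ, ∀ x, K x x ≤ C
  cont : ∀ x, Continuous (K x)
  zero_at_infty : ∀ x, Tendsto (K x) (Filter.cocompact (Rd d)) (𝓝 0)

/-- Integral of a function against a finite signed measure, via the Jordan decomposition. -/
noncomputable def sIntegral {d : ℕ} (α : SignedMeasure (Rd d)) (g : Rd d → ℝ) : ℝ :=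
  ∫ x, g x ∂α.toJordanDecomposition.posPart - ∫ x, g x ∂α.toJordanDecomposition.negPart

/-- Squared MMD of two finite signed measures: `∬ K(x,y) d(α−β)(x) d(α−β)(y)`. -/
noncomputable def mmdSq {d : ℕ} (K : Rd d → Rd d → ℝ) (α β : SignedMeasure (Rd d)) : ℝ :=
  sIntegral (α - β) (fun x => sIntegral (α - β) (fun y => K x y))

/-- The maximum mean discrepancy `d_K` of two finite signed measures. -/
noncomputable def mmd {d : ℕ} (K : Rd d → Rd d → ℝ) (α β : SignedMeasure (Rd d)) : ℝ :=
  Real.sqrt (mmdSq K α β)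

/-- A kernel is characteristic if `d_K(α,β) = 0` implies `α = β` for finite signed
measures `α, β`. -/
def Characteristic {d : ℕ} (K : Rd d → Rd d → ℝ) : Prop :=
  ∀ α β : SignedMeasure (Rd d), mmd K α β = 0 → α = β

/-- The MMD-regularized `f`-divergence `D^λ_{f,ν}(μ)` of a finite signed measure `μ`:
`inf_{σ ∈ M₊} D_f(σ|ν) + (1/(2λ)) d_K(μ,σ)²`. -/
noncomputable def regFDiv {d : ℕ} (K : Rd d → Rd d → ℝ) (f : ℝ → ℝ≥0∞)
    (ν : Measure (Rd d)) (lam : ℝ) (μ : SignedMeasure (Rd d)) : ℝ≥0∞ :=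
  ⨅ σ : {σ : Measure (Rd d) // IsFiniteMeasure σ},
    fDiv f σ.1 ν +
      ENNReal.ofReal (mmdSq K μ (@Measure.toSignedMeasure _ _ σ.1 σ.2) / (2 * lam))

/-!
Comparing the minimizer `σ̂_μ` with the convex combinations `(1 - t) σ̂_μ + t σ` and letting
`t → 0` gives the first-order optimality condition
`⟪μ - σ̂_μ, σ - σ̂_μ⟫ ≤ λ (D_f(σ|ν) - D_f(σ̂_μ|ν))`, where `⟪α, β⟫` is the symmetrized
energy `(∬ K dα dβ + ∬ K dβ dα) / 2`. Testing it at `σ = σ̂_ρ`, testing the condition for `ρ`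
at `σ = σ̂_μ`, and adding, the divergence terms cancel and `w = (μ - σ̂_μ) - (ρ - σ̂_ρ)`
satisfies `⟪w, w⟫ ≤ ⟪w, μ - ρ⟫`. Cauchy–Schwarz for the positive semidefinite energy then gives
`d_K(w) ≤ d_K(μ - ρ)`.
-/

open scoped NNReal

namespace MeasureTheory.SignedMeasure

variable {X : Type*} [MeasurableSpace X]

instance isFiniteMeasure_variation (s : SignedMeasure X) : IsFiniteMeasure s.variation := by
  rw [← s.totalVariation_eq_variation]
  unfold totalVariation
  infer_instance

theorem vectorIntegral_eq_integral_posPart_sub (s : SignedMeasure X) {g : X → ℝ}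
    (hg : Integrable g s.variation) :
    ∫ᵛ x, g x ∂<•s = ∫ x, g x ∂s.toJordanDecomposition.posPart
      - ∫ x, g x ∂s.toJordanDecomposition.negPart := by
  have hle_pos : s.toJordanDecomposition.posPart ≤ s.variation := by
    rw [← s.totalVariation_eq_variation]; exact Measure.le_add_right le_rfl
  have hle_neg : s.toJordanDecomposition.negPart ≤ s.variation := by
    rw [← s.totalVariation_eq_variation]; exact Measure.le_add_left le_rfl
  have hint (π : Measure X) [IsFiniteMeasure π] (hπ : π ≤ s.variation) :
      VectorMeasure.Integrable π.toSignedMeasure g := by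
    rw [VectorMeasure.Integrable, Measure.variation_toSignedMeasure]
    exact hg.mono_measure hπ
  conv_lhs => rw [← s.toSignedMeasure_toJordanDecomposition]
  rw [JordanDecomposition.toSignedMeasure,
    VectorMeasure.integral_sub_vectorMeasure (hint _ hle_pos) (hint _ hle_neg)]
  simp

end MeasureTheory.SignedMeasure

theorem sIntegral_eq_vectorIntegral {d : ℕ} {α : SignedMeasure (Rd d)} {g : Rd d → ℝ}
    (hg : Integrable g α.variation) : sIntegral α g = ∫ᵛ x, g x ∂<•α :=
  (α.vectorIntegral_eq_integral_posPart_sub hg).symm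

def kernelMean {d : ℕ} (K : Rd d → Rd d → ℝ) (β : SignedMeasure (Rd d)) (x : Rd d) : ℝ :=
  ∫ᵛ y, K x y ∂<•β

namespace IsKernel

variable {d : ℕ} {K : Rd d → Rd d → ℝ}

theorem exists_abs_le (hK : IsKernel K) : ∃ C, ∀ x y, |K x y| ≤ C := by
  obtain ⟨C, hC⟩ := hK.bounded
  have hdiag (x : Rd d) : 0 ≤ K x x := by simpa using hK.posdef 1 ![x] ![1]
  refine ⟨C, fun x y => abs_le.mpr ⟨?_, ?_⟩⟩
  all_goals
    have hsum := hK.posdef 2 ![x, y] ![1, 1]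
    have hdiff := hK.posdef 2 ![x, y] ![1, -1]
    simp only [Fin.sum_univ_two, Matrix.cons_val_zero, Matrix.cons_val_one] at hsum hdiff
    nlinarith [hK.symm x y, hC x, hC y, hdiag x, hdiag y]

theorem continuous_left (hK : IsKernel K) (y : Rd d) : Continuous fun x => K x y := by
  simpa only [hK.symm _ y] using hK.cont y

theorem integrable (hK : IsKernel K) (x : Rd d) (π : Measure (Rd d)) [IsFiniteMeasure π] :
    Integrable (K x) π := by
  obtain ⟨C, hC⟩ := hK.exists_abs_le
  exact Integrable.of_bound (hK.cont x).aestronglyMeasurable C (ae_of_all _ (hC x))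

theorem continuous_kernelMean (hK : IsKernel K) (β : SignedMeasure (Rd d)) :
    Continuous (kernelMean K β) := by
  obtain ⟨C, hC⟩ := hK.exists_abs_le
  exact VectorMeasure.continuous_of_dominated (bound := fun _ => C)
    (fun x => (hK.cont x).aestronglyMeasurable) (fun x => ae_of_all _ (hC x))
    (integrable_const C) (ae_of_all _ hK.continuous_left)

theorem integrable_kernelMean (hK : IsKernel K) (α β : SignedMeasure (Rd d)) :
    Integrable (kernelMean K β) α.variation := by
  obtain ⟨C, hC⟩ := hK.exists_abs_le
  refine Integrable.of_bound (hK.continuous_kernelMean β).aestronglyMeasurable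
    (C * ‖(ContinuousLinearMap.lsmul ℝ ℝ : ℝ →L[ℝ] ℝ →L[ℝ] ℝ).flip‖ * β.variation.real univ)
    (ae_of_all _ fun x => ?_)
  exact VectorMeasure.norm_integral_le_of_norm_le_const (ae_of_all _ (hC x))

theorem kernelMean_add (hK : IsKernel K) (β₁ β₂ : SignedMeasure (Rd d)) :
    kernelMean K (β₁ + β₂) = kernelMean K β₁ + kernelMean K β₂ := by
  funext x
  exact VectorMeasure.integral_add_vectorMeasure (hK.integrable x _) (hK.integrable x _)

end IsKernel

theorem kernelMean_smul {d : ℕ} {K : Rd d → Rd d → ℝ} (c : ℝ) (β : SignedMeasure (Rd d)) :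
    kernelMean K (c • β) = c • kernelMean K β := by
  funext x
  exact VectorMeasure.integral_smul_vectorMeasure (B := (ContinuousLinearMap.lsmul ℝ ℝ).flip)
    (K x) c

def kernelForm {d : ℕ} {K : Rd d → Rd d → ℝ} (hK : IsKernel K) :
    LinearMap.BilinForm ℝ (SignedMeasure (Rd d)) :=
  LinearMap.mk₂ ℝ (fun α β => ∫ᵛ x, kernelMean K β x ∂<•α)
    (fun α₁ α₂ β => VectorMeasure.integral_add_vectorMeasure
      (hK.integrable_kernelMean α₁ β) (hK.integrable_kernelMean α₂ β))
    (fun c α β => VectorMeasure.integral_smul_vectorMeasure _ c)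
    (fun α β₁ β₂ => by
      rw [hK.kernelMean_add]
      exact VectorMeasure.integral_add (hK.integrable_kernelMean α β₁)
        (hK.integrable_kernelMean α β₂))
    (fun c α β => by
      rw [kernelMean_smul]
      exact VectorMeasure.integral_smul _ _ _ c)

section kernelForm

variable {d : ℕ} {K : Rd d → Rd d → ℝ} (hK : IsKernel K)

theorem mmdSq_eq_kernelForm (α β : SignedMeasure (Rd d)) :
    mmdSq K α β = kernelForm hK (α - β) (α - β) := by
  have hmean : (fun x => sIntegral (α - β) fun y => K x y) = kernelMean K (α - β) :=
    funext fun x => sIntegral_eq_vectorIntegral (hK.integrable x _)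
  rw [mmdSq, hmean, sIntegral_eq_vectorIntegral (hK.integrable_kernelMean _ _)]
  rfl

/-- A signed measure of negative energy would be at `mmd` distance `√(negative) = 0` from `0`,
hence equal to `0`. -/
theorem kernelForm_self_nonneg (hchar : Characteristic K) (γ : SignedMeasure (Rd d)) :
    0 ≤ kernelForm hK γ γ := by
  by_contra hneg
  have hmmd : mmd K γ 0 = 0 := by
    rw [mmd, mmdSq_eq_kernelForm hK, sub_zero]
    exact Real.sqrt_eq_zero_of_nonpos (not_le.mp hneg).le
  obtain rfl := hchar γ 0 hmmd
  simp at hneg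

end kernelForm

/-- Cauchy–Schwarz is applied to the symmetrization `B + B.flip`, since `B` need not be
symmetric. -/
theorem LinearMap.BilinForm.apply_self_le_of_apply_sub_add_apply_sub_nonpos {M : Type*}
    [AddCommGroup M] [Module ℝ M] {B : LinearMap.BilinForm ℝ M} (hB : ∀ x, 0 ≤ B x x)
    {w z : M} (h : B w (w - z) + B (w - z) w ≤ 0) : B w w ≤ B z z := by
  set S := B + B.flip
  have hS (x y : M) : S x y = B x y + B y x := rfl
  have hcs := S.apply_mul_apply_le_of_forall_zero_le (fun x => by rw [hS]; linarith [hB x]) w z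
  simp only [hS, map_sub, LinearMap.sub_apply] at hcs h
  nlinarith [hB w, hB z]

theorem nonpos_of_forall_mul_le_sq_mul {x c : ℝ}
    (h : ∀ t : ℝ, 0 < t → t ≤ 1 → t * x ≤ t ^ 2 * c) : x ≤ 0 := by
  have hlim : Tendsto (fun t : ℝ => t * c) (𝓝[>] 0) (𝓝 0) := by
    simpa using ((continuous_mul_const c).tendsto 0).mono_left nhdsWithin_le_nhds
  refine ge_of_tendsto hlim ?_
  filter_upwards [Ioo_mem_nhdsGT (zero_lt_one' ℝ)] with t ⟨ht0, ht1⟩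
  have := h t ht0 ht1.le
  rw [sq, mul_assoc] at this
  exact le_of_mul_le_mul_left this ht0

theorem ENNReal.toReal_add_le_toReal_add_of_add_ofReal_le {a b : ℝ≥0∞} {x y : ℝ} (hb : b ≠ ⊤)
    (hx : 0 ≤ x) (hy : 0 ≤ y) (h : a + ENNReal.ofReal x ≤ b + ENNReal.ofReal y) :
    a.toReal + x ≤ b.toReal + y := by
  have ha : a ≠ ⊤ := ne_top_of_le_ne_top (by finiteness) (le_self_add.trans h)
  have := ENNReal.toReal_mono (by finiteness) h
  rwa [ENNReal.toReal_add ha ENNReal.ofReal_ne_top, ENNReal.toReal_add hb ENNReal.ofReal_ne_top,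
    ENNReal.toReal_ofReal hx, ENNReal.toReal_ofReal hy] at this

section fDiv

variable {d : ℕ} {f : ℝ → ℝ≥0∞} {ν : Measure (Rd d)}

theorem fDiv_self (hf : f 1 = 0) (ν : Measure (Rd d)) [SigmaFinite ν] : fDiv f ν ν = 0 := by
  rw [fDiv, Measure.singularPart_self, Measure.coe_zero, Pi.zero_apply, mul_zero, add_zero]
  refine (lintegral_congr_ae ?_).trans lintegral_zero
  filter_upwards [Measure.rnDeriv_self ν] with x hx
  simpa [hx] using hf

theorem fDiv_smul_add_smul_le (hf : IsEntropy f) [SigmaFinite ν]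
    (σ₁ σ₂ : Measure (Rd d)) [IsFiniteMeasure σ₁] [IsFiniteMeasure σ₂]
    {a b : ℝ≥0} (hab : a + b = 1) :
    fDiv f (a • σ₁ + b • σ₂) ν ≤ a * fDiv f σ₁ ν + b * fDiv f σ₂ ν := by
  have hpoint : ∀ᵐ x ∂ν, f (((a • σ₁ + b • σ₂).rnDeriv ν x).toReal)
      ≤ a * f ((σ₁.rnDeriv ν x).toReal) + b * f ((σ₂.rnDeriv ν x).toReal) := by
    filter_upwards [Measure.rnDeriv_add (a • σ₁) (b • σ₂) ν,
      Measure.rnDeriv_smul_left σ₁ ν a, Measure.rnDeriv_smul_left σ₂ ν b,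
      Measure.rnDeriv_lt_top σ₁ ν, Measure.rnDeriv_lt_top σ₂ ν] with x hadd h₁ h₂ hfin₁ hfin₂
    have hx : ((a • σ₁ + b • σ₂).rnDeriv ν x).toReal
        = a * (σ₁.rnDeriv ν x).toReal + b * (σ₂.rnDeriv ν x).toReal := by
      rw [hadd, Pi.add_apply, h₁, h₂, Pi.smul_apply, Pi.smul_apply, ENNReal.smul_def,
        ENNReal.smul_def, smul_eq_mul, smul_eq_mul,
        ENNReal.toReal_add (by finiteness) (by finiteness)]
      simp
    simpa [hx] using hf.convex _ _ a b a.2 b.2 (by exact_mod_cast hab)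
  have hmeas (σ : Measure (Rd d)) : Measurable fun x => f ((σ.rnDeriv ν x).toReal) :=
    hf.lsc.measurable.comp (σ.measurable_rnDeriv ν).ennreal_toReal
  have hsing : (a • σ₁ + b • σ₂).singularPart ν univ
      = a * σ₁.singularPart ν univ + b * σ₂.singularPart ν univ := by
    simp [Measure.singularPart_add, Measure.singularPart_smul]
  calc fDiv f (a • σ₁ + b • σ₂) ν
      ≤ (a * (∫⁻ x, f ((σ₁.rnDeriv ν x).toReal) ∂ν) + b * ∫⁻ x, f ((σ₂.rnDeriv ν x).toReal) ∂ν)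
        + recession f * (a * σ₁.singularPart ν univ + b * σ₂.singularPart ν univ) := by
        rw [fDiv, hsing, ← lintegral_const_mul _ (hmeas σ₁), ← lintegral_const_mul _ (hmeas σ₂),
          ← lintegral_add_left ((hmeas σ₁).const_mul _)]
        gcongr ?_ + _
        exact lintegral_mono_ae hpoint
    _ = a * fDiv f σ₁ ν + b * fDiv f σ₂ ν := by
        rw [fDiv, fDiv]
        ring

end fDiv

theorem MeasureTheory.Measure.toSignedMeasure_smul_add_smul {X : Type*} [MeasurableSpace X]
    (σ₁ σ₂ : Measure X) [IsFiniteMeasure σ₁] [IsFiniteMeasure σ₂] {t : ℝ} (ht₀ : 0 ≤ t)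
    (ht₁ : t ≤ 1) :
    ((1 - t).toNNReal • σ₁ + t.toNNReal • σ₂).toSignedMeasure
      = σ₁.toSignedMeasure + t • (σ₂.toSignedMeasure - σ₁.toSignedMeasure) := by
  rw [Measure.toSignedMeasure_add, Measure.toSignedMeasure_smul, Measure.toSignedMeasure_smul,
    NNReal.smul_def, NNReal.smul_def, Real.coe_toNNReal _ (by linarith),
    Real.coe_toNNReal _ ht₀]
  module

def IsRegFDivMinimizer {d : ℕ} (K : Rd d → Rd d → ℝ) (f : ℝ → ℝ≥0∞) (ν : Measure (Rd d))
    (lam : ℝ) (μ : SignedMeasure (Rd d)) (σ : Measure (Rd d)) [IsFiniteMeasure σ] : Prop :=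
  fDiv f σ ν + ENNReal.ofReal (mmdSq K μ σ.toSignedMeasure / (2 * lam)) = regFDiv K f ν lam μ

section regFDiv

variable {d : ℕ} {K : Rd d → Rd d → ℝ} {f : ℝ → ℝ≥0∞} {ν : Measure (Rd d)} {lam : ℝ}
  {μ : SignedMeasure (Rd d)}

theorem regFDiv_le (σ : Measure (Rd d)) [IsFiniteMeasure σ] :
    regFDiv K f ν lam μ ≤ fDiv f σ ν + ENNReal.ofReal (mmdSq K μ σ.toSignedMeasure / (2 * lam)) :=
  iInf_le_of_le ⟨σ, inferInstance⟩ le_rfl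

theorem regFDiv_ne_top (hf : f 1 = 0) [IsFiniteMeasure ν] : regFDiv K f ν lam μ ≠ ⊤ := by
  refine ne_top_of_le_ne_top ?_ (regFDiv_le ν)
  rw [fDiv_self hf, zero_add]
  exact ENNReal.ofReal_ne_top

namespace IsRegFDivMinimizer

variable {σ₁ σ₂ : Measure (Rd d)} [IsFiniteMeasure σ₁] [IsFiniteMeasure σ₂]

theorem fDiv_ne_top (hf : f 1 = 0) [IsFiniteMeasure ν]
    (hσ₁ : IsRegFDivMinimizer K f ν lam μ σ₁) : fDiv f σ₁ ν ≠ ⊤ :=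
  ne_top_of_le_ne_top (regFDiv_ne_top hf) (hσ₁ ▸ le_self_add)

/-- Comparing the minimizer `σ₁` with the convex combination `(1 - t) σ₁ + t σ₂`. -/
theorem le_of_convex_comb (hK : IsKernel K) (hchar : Characteristic K) (hf : IsEntropy f)
    [IsFiniteMeasure ν] (hlam : 0 < lam) (hσ₁ : IsRegFDivMinimizer K f ν lam μ σ₁)
    (h₂ : fDiv f σ₂ ν ≠ ⊤) {t : ℝ} (ht₀ : 0 ≤ t) (ht₁ : t ≤ 1) :
    2 * lam * (fDiv f σ₁ ν).toReal
        + kernelForm hK (μ - σ₁.toSignedMeasure) (μ - σ₁.toSignedMeasure)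
      ≤ 2 * lam * ((1 - t) * (fDiv f σ₁ ν).toReal + t * (fDiv f σ₂ ν).toReal)
        + kernelForm hK (μ - σ₁.toSignedMeasure - t • (σ₂.toSignedMeasure - σ₁.toSignedMeasure))
            (μ - σ₁.toSignedMeasure - t • (σ₂.toSignedMeasure - σ₁.toSignedMeasure)) := by
  have h₁ := hσ₁.fDiv_ne_top hf.one_eq_zero
  set σ := (1 - t).toNNReal • σ₁ + t.toNNReal • σ₂
  have hσ : μ - σ.toSignedMeasure
      = μ - σ₁.toSignedMeasure - t • (σ₂.toSignedMeasure - σ₁.toSignedMeasure) := by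
    rw [Measure.toSignedMeasure_smul_add_smul σ₁ σ₂ ht₀ ht₁, sub_add_eq_sub_sub]
  have hconv := fDiv_smul_add_smul_le hf (ν := ν) σ₁ σ₂
    (a := (1 - t).toNNReal) (b := t.toNNReal) (by rw [← Real.toNNReal_add (by linarith) ht₀]; simp)
  have hle : fDiv f σ₁ ν + ENNReal.ofReal (mmdSq K μ σ₁.toSignedMeasure / (2 * lam))
      ≤ ((1 - t).toNNReal * fDiv f σ₁ ν + t.toNNReal * fDiv f σ₂ ν)
        + ENNReal.ofReal (mmdSq K μ σ.toSignedMeasure / (2 * lam)) :=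
    hσ₁ ▸ (regFDiv_le σ).trans (by gcongr)
  rw [mmdSq_eq_kernelForm hK, mmdSq_eq_kernelForm hK, hσ] at hle
  have h2lam : 0 < 2 * lam := by linarith
  have hnonneg (γ : SignedMeasure (Rd d)) : 0 ≤ kernelForm hK γ γ / (2 * lam) :=
    div_nonneg (kernelForm_self_nonneg hK hchar γ) h2lam.le
  have hreal := ENNReal.toReal_add_le_toReal_add_of_add_ofReal_le (by finiteness)
    (hnonneg _) (hnonneg _) hle
  rw [ENNReal.toReal_add (by finiteness) (by finiteness), ENNReal.toReal_mul,
    ENNReal.toReal_mul, ENNReal.coe_toReal, ENNReal.coe_toReal, Real.coe_toNNReal _ (by linarith),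
    Real.coe_toNNReal _ ht₀] at hreal
  field_simp at hreal
  linarith

/-- The first-order optimality condition at `σ₁`, tested in the direction of `σ₂`. -/
theorem kernelForm_add_kernelForm_le (hK : IsKernel K) (hchar : Characteristic K)
    (hf : IsEntropy f) [IsFiniteMeasure ν] (hlam : 0 < lam)
    (hσ₁ : IsRegFDivMinimizer K f ν lam μ σ₁) (h₂ : fDiv f σ₂ ν ≠ ⊤) :
    kernelForm hK (μ - σ₁.toSignedMeasure) (σ₂.toSignedMeasure - σ₁.toSignedMeasure)
      + kernelForm hK (σ₂.toSignedMeasure - σ₁.toSignedMeasure) (μ - σ₁.toSignedMeasure)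
      ≤ 2 * lam * ((fDiv f σ₂ ν).toReal - (fDiv f σ₁ ν).toReal) := by
  rw [← sub_nonpos]
  refine nonpos_of_forall_mul_le_sq_mul (c := kernelForm hK
    (σ₂.toSignedMeasure - σ₁.toSignedMeasure) (σ₂.toSignedMeasure - σ₁.toSignedMeasure))
    fun t ht₀ ht₁ => ?_
  have h := hσ₁.le_of_convex_comb hK hchar hf hlam h₂ ht₀.le ht₁
  set u := μ - σ₁.toSignedMeasure
  set e := σ₂.toSignedMeasure - σ₁.toSignedMeasure
  simp only [map_sub, map_smul, LinearMap.sub_apply, LinearMap.smul_apply, smul_eq_mul] at h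
  linear_combination h

end IsRegFDivMinimizer

end regFDiv

theorem regFDiv_gradient_nonexpansive_general {d : ℕ} (K : Rd d → Rd d → ℝ)
    (hK : IsKernel K) (hchar : Characteristic K)
    (f : ℝ → ℝ≥0∞) (hf : IsEntropy f)
    (ν : Measure (Rd d)) [IsFiniteMeasure ν] (lam : ℝ) (hlam : 0 < lam)
    (μ ρ : SignedMeasure (Rd d))
    (σμ σρ : Measure (Rd d)) [IsFiniteMeasure σμ] [IsFiniteMeasure σρ]
    (hμopt : fDiv f σμ ν + ENNReal.ofReal (mmdSq K μ σμ.toSignedMeasure / (2 * lam))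
      = regFDiv K f ν lam μ)
    (hρopt : fDiv f σρ ν + ENNReal.ofReal (mmdSq K ρ σρ.toSignedMeasure / (2 * lam))
      = regFDiv K f ν lam ρ) :
    mmd K (μ - σμ.toSignedMeasure) (ρ - σρ.toSignedMeasure) ≤ mmd K μ ρ := by
  have hμmin : IsRegFDivMinimizer K f ν lam μ σμ := hμopt
  have hρmin : IsRegFDivMinimizer K f ν lam ρ σρ := hρopt
  have hμ := hμmin.kernelForm_add_kernelForm_le hK hchar hf hlam
    (hρmin.fDiv_ne_top hf.one_eq_zero)
  have hρ := hρmin.kernelForm_add_kernelForm_le hK hchar hf hlam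
    (hμmin.fDiv_ne_top hf.one_eq_zero)
  set w := (μ - σμ.toSignedMeasure) - (ρ - σρ.toSignedMeasure)
  have hmono : kernelForm hK w (w - (μ - ρ)) + kernelForm hK (w - (μ - ρ)) w ≤ 0 := by
    rw [show w - (μ - ρ) = σρ.toSignedMeasure - σμ.toSignedMeasure by simp only [w]; abel]
    simp only [w, map_sub, LinearMap.sub_apply] at hμ hρ ⊢
    linarith
  rw [mmd, mmd, mmdSq_eq_kernelForm hK, mmdSq_eq_kernelForm hK]
  exact Real.sqrt_le_sqrt
    (LinearMap.BilinForm.apply_self_le_of_apply_sub_add_apply_sub_nonpos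
      (kernelForm_self_nonneg hK hchar) hmono)

/-- Nonexpansiveness in MMD of `μ ↦ μ − σ̂_μ`, where `σ̂_μ` is the minimizer defining
`D^λ_{f,ν}(μ)` (i.e. the gradient `(1/λ)(μ − σ̂_μ)` of `D^λ_{f,ν}` is `(1/λ)`-Lipschitz):
`d_K(μ − σ̂_μ, ρ − σ̂_ρ) ≤ d_K(μ, ρ)`. -/
theorem regFDiv_gradient_nonexpansive {d : ℕ} (K : Rd d → Rd d → ℝ)
    (hK : IsKernel K) (hchar : Characteristic K)
    (f : ℝ → ℝ≥0∞) (hf : IsEntropy f) (hmin : UniqueMinOne f)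
    (ν : Measure (Rd d)) [IsFiniteMeasure ν] (lam : ℝ) (hlam : 0 < lam)
    (μ ρ : SignedMeasure (Rd d))
    (σμ σρ : Measure (Rd d)) [IsFiniteMeasure σμ] [IsFiniteMeasure σρ]
    (hμopt : fDiv f σμ ν + ENNReal.ofReal (mmdSq K μ σμ.toSignedMeasure / (2 * lam))
      = regFDiv K f ν lam μ)
    (hρopt : fDiv f σρ ν + ENNReal.ofReal (mmdSq K ρ σρ.toSignedMeasure / (2 * lam))
      = regFDiv K f ν lam ρ) :
    mmd K (μ - σμ.toSignedMeasure) (ρ - σρ.toSignedMeasure) ≤ mmd K μ ρ :=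
  regFDiv_gradient_nonexpansive_general K hK hchar f hf ν lam hlam μ ρ σμ σρ hμopt hρopt
end
end

section
/- Let f be an entropy function with infinite recession constant f'_∞ = ∞, and let ν be a Borel probability measure on ℝ^d. Then for every B > 0 the sublevel set { μ ∈ P(ℝ^d) : D_f(μ|ν) ≤ B } is uniformly tight: for every ε > 0 there exists r > 0 such that μ(ℝ^d ∖ B_r) ≤ ε for every probability measure μ with D_f(μ|ν) ≤ B, where B_r is the closed Euclidean ball of radius r around 0. -/
open MeasureTheory ENNReal Filter Topology Set
open scoped ZeroAtInfty RealInnerProductSpace BoundedContinuousFunction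

noncomputable section

/-!
If `f'_∞ = ∞`, then for every `K` there is `M` with `K t ≤ f t` for `t ≥ M`, so
`K ρ ≤ K M + f ρ` pointwise. A finite divergence forces `μ ≪ ν`, and integrating the density
`ρ = dμ/dν` over the complement `A` of a ball gives `K μ(A) ≤ K M ν(A) + D_f(μ|ν)`.
Taking `K` large compared with the bound `B` and then the ball so large that `M ν(A)` is small
bounds `μ(A)` uniformly.
-/

open scoped NNReal

namespace IsEntropy

variable {f : ℝ → ℝ≥0∞}

/-- The slope `(f t - f 1) / (t - 1)` is nondecreasing on `[1, ∞)`. -/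
lemma ofReal_sub_one_mul_le (hf : IsEntropy f) {s t : ℝ} (hs : 1 ≤ s) (hst : s ≤ t) :
    ENNReal.ofReal (t - 1) * f s ≤ ENNReal.ofReal (s - 1) * f t := by
  rcases hs.eq_or_lt with rfl | hs
  · simp [hf.one_eq_zero]
  have ht : 0 < t - 1 := by linarith
  have hconv := hf.convex 1 t ((t - s) / (t - 1)) ((s - 1) / (t - 1))
    (div_nonneg (by linarith) ht.le) (div_nonneg (by linarith) ht.le) (by field_simp; ring)
  have hs_eq : (t - s) / (t - 1) * 1 + (s - 1) / (t - 1) * t = s := by field_simp; ring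
  rw [hs_eq, hf.one_eq_zero, mul_zero, zero_add] at hconv
  calc ENNReal.ofReal (t - 1) * f s
      ≤ ENNReal.ofReal (t - 1) * (ENNReal.ofReal ((s - 1) / (t - 1)) * f t) := by gcongr
    _ = ENNReal.ofReal (s - 1) * f t := by
      rw [← mul_assoc, ← ENNReal.ofReal_mul ht.le, mul_div_cancel₀ _ ht.ne']

lemma eventually_mul_le (hf : IsEntropy f) (hrec : recession f = ⊤) (K : ℝ≥0) :
    ∀ᶠ t in atTop, (K : ℝ≥0∞) * ENNReal.ofReal t ≤ f t := by
  have hfreq : ∃ᶠ s in atTop, (K : ℝ≥0∞) < f s / ENNReal.ofReal s :=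
    frequently_lt_of_lt_limsup (IsCobounded.of_frequently_ge (.of_forall fun _ ↦ bot_le))
      (by rw [← recession, hrec]; exact coe_lt_top)
  obtain ⟨s, hKs, hs⟩ := (hfreq.and_eventually (eventually_gt_atTop 1)).exists
  rw [ENNReal.lt_div_iff_mul_lt (.inl (by simpa using hs.trans' one_pos)) (.inl ofReal_ne_top)]
    at hKs
  filter_upwards [eventually_ge_atTop s] with t hst
  have hs1 : ENNReal.ofReal (s - 1) ≠ 0 := by simpa using hs
  refine (ENNReal.mul_le_mul_iff_right hs1 ofReal_ne_top).1 ?_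
  calc ENNReal.ofReal (s - 1) * (K * ENNReal.ofReal t)
      = K * ENNReal.ofReal ((s - 1) * t) := by
        rw [ENNReal.ofReal_mul (by linarith)]; ring
    _ ≤ K * ENNReal.ofReal ((t - 1) * s) := by gcongr K * ENNReal.ofReal ?_; nlinarith
    _ = ENNReal.ofReal (t - 1) * (K * ENNReal.ofReal s) := by
        rw [ENNReal.ofReal_mul (show 0 ≤ t - 1 by linarith)]; ring
    _ ≤ ENNReal.ofReal (t - 1) * f s := by gcongr
    _ ≤ ENNReal.ofReal (s - 1) * f t := hf.ofReal_sub_one_mul_le hs.le hst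

end IsEntropy

section Density

variable {α : Type*} [MeasurableSpace α] {f : ℝ → ℝ≥0∞} {K : ℝ≥0} {M : ℝ}

lemma mul_le_mul_add_of_forall_le (hM : ∀ t, M ≤ t → (K : ℝ≥0∞) * ENNReal.ofReal t ≤ f t)
    {x : ℝ≥0∞} (hx : x ≠ ⊤) : K * x ≤ K * ENNReal.ofReal M + f x.toReal := by
  rw [← ENNReal.ofReal_toReal hx]
  rcases le_total x.toReal M with hxM | hMx
  · exact le_add_right (by gcongr)
  · rw [ENNReal.toReal_ofReal ENNReal.toReal_nonneg]
    exact le_add_left (hM _ hMx)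

lemma mul_setLIntegral_le (hM : ∀ t, M ≤ t → (K : ℝ≥0∞) * ENNReal.ofReal t ≤ f t)
    (ν : Measure α) {ρ : α → ℝ≥0∞} (hρ : ∀ᵐ x ∂ν, ρ x ≠ ⊤) (A : Set α) :
    K * ∫⁻ x in A, ρ x ∂ν ≤ K * ENNReal.ofReal M * ν A + ∫⁻ x, f (ρ x).toReal ∂ν :=
  calc K * ∫⁻ x in A, ρ x ∂ν = ∫⁻ x in A, K * ρ x ∂ν := (lintegral_const_mul' _ _ coe_ne_top).symm
    _ ≤ ∫⁻ x in A, (K * ENNReal.ofReal M + f (ρ x).toReal) ∂ν :=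
        lintegral_mono_ae <| ae_restrict_of_ae <| hρ.mono fun _ ↦ mul_le_mul_add_of_forall_le hM
    _ = K * ENNReal.ofReal M * ν A + ∫⁻ x in A, f (ρ x).toReal ∂ν := by
        rw [lintegral_add_left measurable_const, setLIntegral_const]
    _ ≤ K * ENNReal.ofReal M * ν A + ∫⁻ x, f (ρ x).toReal ∂ν :=
        add_le_add_right (setLIntegral_le_lintegral _ _) _

end Density

section fDiv

variable {d : ℕ} {f : ℝ → ℝ≥0∞} {μ ν : Measure (Rd d)}

lemma absolutelyContinuous_of_fDiv_ne_top [μ.HaveLebesgueDecomposition ν]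
    (hrec : recession f = ⊤) (h : fDiv f μ ν ≠ ⊤) : μ ≪ ν := by
  rw [← Measure.singularPart_eq_zero, ← Measure.measure_univ_eq_zero]
  by_contra hsing
  exact h (top_unique (le_add_left (by rw [hrec, ENNReal.top_mul hsing])))

lemma mul_measure_le_of_fDiv_ne_top [SigmaFinite μ] [SigmaFinite ν] {K : ℝ≥0} {M : ℝ}
    (hrec : recession f = ⊤) (hM : ∀ t, M ≤ t → (K : ℝ≥0∞) * ENNReal.ofReal t ≤ f t)
    (h : fDiv f μ ν ≠ ⊤) (A : Set (Rd d)) :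
    K * μ A ≤ K * ENNReal.ofReal M * ν A + fDiv f μ ν := by
  rw [← Measure.setLIntegral_rnDeriv (absolutelyContinuous_of_fDiv_ne_top hrec h)]
  exact (mul_setLIntegral_le hM ν (Measure.rnDeriv_ne_top μ ν) A).trans
    (add_le_add_right le_self_add _)

end fDiv

theorem fDiv_sublevel_tight_general {d : ℕ} (f : ℝ → ℝ≥0∞) (hf : IsEntropy f)
    (hrec : recession f = ⊤) (ν : Measure (Rd d)) [IsProbabilityMeasure ν]
    (B : ℝ) :
    ∀ ε : ℝ, 0 < ε → ∃ r : ℝ, 0 < r ∧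
      ∀ μ : Measure (Rd d), IsProbabilityMeasure μ →
        fDiv f μ ν ≤ ENNReal.ofReal B →
        μ (Metric.closedBall (0 : Rd d) r)ᶜ ≤ ENNReal.ofReal ε := by
  intro ε hε
  have hε2 : ENNReal.ofReal ε / 2 ≠ 0 := by simpa using hε
  obtain ⟨n, hn⟩ := ENNReal.exists_nat_mul_gt hε2 (ofReal_ne_top (r := B))
  obtain ⟨M, hM⟩ := (hf.eventually_mul_le hrec n).exists_forall_of_atTop
  have hν : Tendsto (fun r : ℝ ↦ ν (Metric.closedBall 0 r)ᶜ) atTop (𝓝 0) := by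
    simpa using tendsto_measure_compl_closedBall_of_isTightMeasureSet
      (isTightMeasureSet_singleton (μ := ν)) 0
  obtain ⟨r, hνr, hr⟩ := ((ENNReal.Tendsto.const_mul hν (.inr ofReal_ne_top)).eventually
    (eventually_le_nhds (by rwa [mul_zero, pos_iff_ne_zero])) |>.and
    (eventually_gt_atTop 0)).exists
  refine ⟨r, hr, fun μ hμ hdiv ↦ ?_⟩
  have hn0 : (n : ℝ≥0∞) ≠ 0 := by rintro h; simp [h] at hn
  refine (ENNReal.mul_le_mul_iff_right hn0 (natCast_ne_top n)).1 ?_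
  calc (n : ℝ≥0∞) * μ (Metric.closedBall 0 r)ᶜ
      ≤ n * ENNReal.ofReal M * ν (Metric.closedBall 0 r)ᶜ + fDiv f μ ν := by
        exact_mod_cast mul_measure_le_of_fDiv_ne_top hrec hM (hdiv.trans_lt ofReal_lt_top).ne _
    _ ≤ n * (ENNReal.ofReal ε / 2) + n * (ENNReal.ofReal ε / 2) := by
        rw [mul_assoc]; exact add_le_add (by gcongr) (hdiv.trans hn.le)
    _ = n * ENNReal.ofReal ε := by rw [← mul_add, ENNReal.add_halves]

/-- For an entropy function with infinite recession constant, sublevel sets of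
`D_f(·|ν)` among probability measures are uniformly tight. -/
theorem fDiv_sublevel_tight {d : ℕ} (f : ℝ → ℝ≥0∞) (hf : IsEntropy f)
    (hrec : recession f = ⊤) (ν : Measure (Rd d)) [IsProbabilityMeasure ν]
    (B : ℝ) (hB : 0 < B) :
    ∀ ε : ℝ, 0 < ε → ∃ r : ℝ, 0 < r ∧
      ∀ μ : Measure (Rd d), IsProbabilityMeasure μ →
        fDiv f μ ν ≤ ENNReal.ofReal B →
        μ (Metric.closedBall (0 : Rd d) r)ᶜ ≤ ENNReal.ofReal ε :=
  fDiv_sublevel_tight_general f hf hrec ν B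
end
end
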